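/- arXiv:1408.0719 — 6 statements merged into one kernel-verified Lean document; each statement's English description precedes it below -/
import Mathlib

section
/- Let P be a row-stochastic n×n matrix, A = diag(α₁,…,αₙ) with 0 ≤ αᵢ < 1, and v a probability vector (row vector, nonnegative entries summing to 1). Define π = (1 / (vᵀ(I−AP)⁻¹𝟙)) · vᵀ(I−AP)⁻¹. Then π is a stationary distribution of the Markov chain with transition matrix P̃ = A·P + (I−A)·𝟙·vᵀ, i.e., π·P̃ = π and π·𝟙 = 1. -/
open Matrix

/-!
The matrix `B = A P` is nonnegative with row sums `αᵢ < 1`, so `1 - B` satisfies a minimum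
principle: if `(1 - B) y ≥ 0` then `y ≥ 0` (look at a coordinate where `y` is smallest). Hence
`1 - B` is invertible with a nonnegative inverse, and `w = vᵀ (1 - AP)⁻¹` is a nonnegative
solution of `w = v + w A P`. Multiplying by `𝟙` gives `w (1 - A) 𝟙 = v 𝟙 = 1`, which is exactly
what makes `w` invariant under `P̃`; the normalising constant `w 𝟙 = 1 + w A 𝟙` is at least `1`.
-/

namespace Matrix

section Substochastic

variable {ι : Type*} [Fintype ι] [DecidableEq ι] {B : Matrix ι ι ℝ}

theorem nonneg_of_nonneg_one_sub_mulVec (hB0 : ∀ i j, 0 ≤ B i j) (hB1 : ∀ i, ∑ j, B i j < 1)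
    {y : ι → ℝ} (hy : 0 ≤ (1 - B) *ᵥ y) : 0 ≤ y := by
  intro i
  obtain ⟨k, -, hk⟩ := Finset.exists_min_image Finset.univ y ⟨i, Finset.mem_univ i⟩
  have hrow : (∑ j, B k j) * y k ≤ ∑ j, B k j * y j := by
    rw [Finset.sum_mul]
    exact Finset.sum_le_sum fun j _ =>
      mul_le_mul_of_nonneg_left (hk j (Finset.mem_univ j)) (hB0 k j)
  have hyk : 0 ≤ y k - ∑ j, B k j * y j := by
    have := hy k
    rwa [sub_mulVec, one_mulVec] at this
  have hk0 : 0 ≤ y k :=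
    nonneg_of_mul_nonneg_right (a := 1 - ∑ j, B k j) (by linarith) (sub_pos.2 (hB1 k))
  exact hk0.trans (hk i (Finset.mem_univ i))

theorem isUnit_one_sub (hB0 : ∀ i j, 0 ≤ B i j) (hB1 : ∀ i, ∑ j, B i j < 1) : IsUnit (1 - B) := by
  rw [← mulVec_injective_iff_isUnit]
  intro y z h
  have hker : (1 - B) *ᵥ (y - z) = 0 := by rw [mulVec_sub, h, sub_self]
  have hle : 0 ≤ y - z := nonneg_of_nonneg_one_sub_mulVec hB0 hB1 hker.ge
  have hge : 0 ≤ -(y - z) :=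
    nonneg_of_nonneg_one_sub_mulVec hB0 hB1 (by rw [mulVec_neg, hker, neg_zero])
  exact sub_eq_zero.1 (le_antisymm (neg_nonneg.1 hge) hle)

theorem inv_one_sub_nonneg (hB0 : ∀ i j, 0 ≤ B i j) (hB1 : ∀ i, ∑ j, B i j < 1) (i j : ι) :
    0 ≤ (1 - B)⁻¹ i j := by
  have hdet := (isUnit_iff_isUnit_det _).1 (isUnit_one_sub hB0 hB1)
  have hcol : (1 - B) *ᵥ ((1 - B)⁻¹ *ᵥ Pi.single j 1) = Pi.single j 1 := by
    rw [mulVec_mulVec, mul_nonsing_inv _ hdet, one_mulVec]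
  have := nonneg_of_nonneg_one_sub_mulVec hB0 hB1 (hcol ▸ Pi.single_nonneg.2 zero_le_one) i
  simpa [mulVec_single_one] using this

end Substochastic

section Restart

variable {ι : Type*} [Fintype ι] [DecidableEq ι] {P : Matrix ι ι ℝ} {α v w : ι → ℝ}

theorem diagonal_mulVec_one : diagonal α *ᵥ 1 = α :=
  funext fun i => by simp [mulVec_diagonal]

theorem dotProduct_one_sub_eq_sum_of_vecMul_eq (hP : P ∈ rowStochastic ℝ ι)
    (hw : w ᵥ* (1 - diagonal α * P) = v) : w ⬝ᵥ (1 - α) = ∑ i, v i := by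
  calc w ⬝ᵥ (1 - α) = w ⬝ᵥ ((1 - diagonal α * P) *ᵥ 1) := by
        rw [sub_mulVec, ← mulVec_mulVec, one_vecMul_of_mem_rowStochastic hP, one_mulVec,
          diagonal_mulVec_one]
    _ = ∑ i, v i := by rw [dotProduct_mulVec, hw, dotProduct_one]

theorem vecMul_restart_eq_self (hP : P ∈ rowStochastic ℝ ι)
    (hw : w ᵥ* (1 - diagonal α * P) = v) (hv1 : ∑ i, v i = 1) :
    w ᵥ* (diagonal α * P + (1 - diagonal α) * of fun _ j => v j) = w := by
  have hstay : w ᵥ* (diagonal α * P) = w - v := by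
    rw [← hw, vecMul_sub, vecMul_one, sub_sub_cancel]
  have hrestart : (w ᵥ* (1 - diagonal α)) ᵥ* (of fun _ j => v j) = (w ⬝ᵥ (1 - α)) • v := by
    rw [show (of fun _ j => v j : Matrix ι ι ℝ) = vecMulVec 1 v from (one_vecMulVec v).symm,
      vecMul_vecMulVec, ← dotProduct_mulVec, sub_mulVec, one_mulVec, diagonal_mulVec_one]
  rw [vecMul_add, ← vecMul_vecMul (M := 1 - diagonal α), hstay, hrestart,
    dotProduct_one_sub_eq_sum_of_vecMul_eq hP hw, hv1, one_smul, sub_add_cancel]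

theorem one_le_sum_of_vecMul_eq (hP : P ∈ rowStochastic ℝ ι) (hα : ∀ i, 0 ≤ α i)
    (hw0 : 0 ≤ w) (hw : w ᵥ* (1 - diagonal α * P) = v) (hv1 : ∑ i, v i = 1) :
    1 ≤ ∑ i, w i := by
  have h := dotProduct_one_sub_eq_sum_of_vecMul_eq hP hw
  rw [dotProduct_sub, dotProduct_one, hv1] at h
  have : 0 ≤ w ⬝ᵥ α := Finset.sum_nonneg fun i _ => mul_nonneg (hw0 i) (hα i)
  linarith

end Restart

end Matrix

theorem stmt1 {n : ℕ} (P A : Matrix (Fin n) (Fin n) ℝ) (α v : Fin n → ℝ)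
    (hP0 : ∀ i j, 0 ≤ P i j) (hP1 : ∀ i, ∑ j, P i j = 1)
    (hA : A = Matrix.diagonal α) (hα : ∀ i, 0 ≤ α i ∧ α i < 1)
    (hv0 : ∀ i, 0 ≤ v i) (hv1 : ∑ i, v i = 1)
    (π : Fin n → ℝ)
    (hπ : π = (∑ j, (Matrix.vecMul v (1 - A * P)⁻¹) j)⁻¹ •
        Matrix.vecMul v (1 - A * P)⁻¹)
    (Ptilde : Matrix (Fin n) (Fin n) ℝ)
    (hPt : Ptilde = A * P + (1 - A) * Matrix.of (fun _ j => v j)) :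
    Matrix.vecMul π Ptilde = π ∧ ∑ j, π j = 1 := by
  subst hA hπ hPt
  have hP : P ∈ rowStochastic ℝ (Fin n) := mem_rowStochastic_iff_sum.2 ⟨hP0, hP1⟩
  have hB0 : ∀ i j, 0 ≤ (diagonal α * P) i j := fun i j => by
    simpa [diagonal_mul] using mul_nonneg (hα i).1 (hP0 i j)
  have hB1 : ∀ i, ∑ j, (diagonal α * P) i j < 1 := fun i => by
    simpa [diagonal_mul, ← Finset.mul_sum, hP1] using (hα i).2
  set w := v ᵥ* (1 - diagonal α * P)⁻¹
  have hw : w ᵥ* (1 - diagonal α * P) = v := by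
    rw [vecMul_vecMul, nonsing_inv_mul _
      ((isUnit_iff_isUnit_det _).1 (isUnit_one_sub hB0 hB1)), vecMul_one]
  have hw0 : 0 ≤ w := fun j =>
    show 0 ≤ ∑ i, v i * _ from
      Finset.sum_nonneg fun i _ => mul_nonneg (hv0 i) (inv_one_sub_nonneg hB0 hB1 i j)
  have hS := one_le_sum_of_vecMul_eq hP (fun i => (hα i).1) hw0 hw hv1
  refine ⟨by rw [smul_vecMul, vecMul_restart_eq_self hP hw hv1], ?_⟩
  simp only [Pi.smul_apply, smul_eq_mul, ← Finset.mul_sum]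
  exact inv_mul_cancel₀ (by linarith)
end

section
/- Let W be a symmetric n×n matrix with nonnegative entries and positive row sums dᵢ = Σⱼ Wᵢⱼ, D = diag(d₁,…,dₙ), P = D⁻¹W, and A = diag(αᵢ) with 0 < αᵢ < 1. Define for each i the quantity Kᵢ = 1/(eᵢᵀ(I−AP)⁻¹𝟙) and πⱼ(i) = Kᵢ · eᵢᵀ(I−AP)⁻¹eⱼ. Then (dᵢ/(αᵢ Kᵢ))·πⱼ(i) = (dⱼ/(αⱼ Kⱼ))·πᵢ(j) for all i, j. -/
/-!
With `c = α / d` we have `1 - A P = diag c * (diag c⁻¹ - W)`, and the second factor is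
symmetric, so `diag (d / α) * (1 - A P)⁻¹` is symmetric. The normalizations `Kᵢ` cancel
because they are nonzero: the row sums of `(1 - A P)⁻¹` are at least `1`, by a minimum
principle for the nonnegative matrix `A P`, whose row sums `αᵢ` are `< 1`.
-/

open Matrix

section SubstochasticInverse

variable {ι 𝕜 : Type*} [Fintype ι] [DecidableEq ι] [Field 𝕜] [LinearOrder 𝕜] [IsStrictOrderedRing 𝕜]
  {B : Matrix ι ι 𝕜}

omit [DecidableEq ι] in
theorem nonneg_of_mulVec_le_self (hB : ∀ a b, 0 ≤ B a b) (hrow : ∀ a, ∑ b, B a b < 1)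
    {x : ι → 𝕜} (hx : ∀ a, (B *ᵥ x) a ≤ x a) (a : ι) : 0 ≤ x a := by
  obtain ⟨m, -, hm⟩ := Finset.univ.exists_min_image x ⟨a, Finset.mem_univ a⟩
  refine le_trans ?_ (hm a (Finset.mem_univ a))
  by_contra! hneg
  have : (∑ b, B m b) * x m ≤ (B *ᵥ x) m := by
    rw [Finset.sum_mul, mulVec, dotProduct]
    exact Finset.sum_le_sum fun b _ => mul_le_mul_of_nonneg_left (hm b (Finset.mem_univ b)) (hB m b)
  nlinarith [hrow m, hx m]

theorem det_one_sub_ne_zero (hB : ∀ a b, 0 ≤ B a b) (hrow : ∀ a, ∑ b, B a b < 1) :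
    (1 - B).det ≠ 0 := by
  intro hdet
  obtain ⟨x, hx0, hx⟩ := exists_mulVec_eq_zero_iff.mpr hdet
  have hBx : B *ᵥ x = x := by
    rw [sub_mulVec, one_mulVec, sub_eq_zero] at hx
    exact hx.symm
  refine hx0 (funext fun a => le_antisymm ?_ (nonneg_of_mulVec_le_self hB hrow (by simp [hBx]) a))
  simpa using nonneg_of_mulVec_le_self hB hrow (x := -x) (by simp [mulVec_neg, hBx]) a

theorem one_le_sum_inv_one_sub (hB : ∀ a b, 0 ≤ B a b) (hrow : ∀ a, ∑ b, B a b < 1) (a : ι) :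
    1 ≤ ∑ b, (1 - B)⁻¹ a b := by
  set v := (1 - B)⁻¹ *ᵥ 1
  have hv : v = 1 + B *ᵥ v := by
    have h := congrArg (· *ᵥ (1 : ι → 𝕜))
      (mul_nonsing_inv (1 - B) (isUnit_iff_ne_zero.mpr (det_one_sub_ne_zero hB hrow)))
    simp only [← mulVec_mulVec, sub_mulVec, one_mulVec] at h
    exact sub_eq_iff_eq_add.mp h
  have hv0 := nonneg_of_mulVec_le_self hB hrow (x := v) fun b => by
    rw [congrFun hv b, Pi.add_apply, Pi.one_apply]
    linarith
  have hBv : 0 ≤ (B *ᵥ v) a := Finset.sum_nonneg fun b _ => mul_nonneg (hB a b) (hv0 b)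
  have hva : v a = ∑ b, (1 - B)⁻¹ a b := by simp [v, mulVec, dotProduct]
  rw [← hva, hv]
  simpa using hBv

end SubstochasticInverse

theorem isSymm_diagonal_inv_mul_inv_one_sub_diagonal_mul {ι K : Type*} [Fintype ι] [DecidableEq ι]
    [Field K] {W : Matrix ι ι K} (hW : W.IsSymm) {c : ι → K} (hc : ∀ a, c a ≠ 0) :
    (diagonal c⁻¹ * (1 - diagonal c * W)⁻¹).IsSymm := by
  have hcinv : (diagonal c)⁻¹ = diagonal c⁻¹ :=
    inv_eq_left_inv (by simp [diagonal_mul_diagonal, hc])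
  have hfac : 1 - diagonal c * W = diagonal c * (diagonal c⁻¹ - W) := by
    simp [mul_sub, diagonal_mul_diagonal, hc]
  have hS : (diagonal c⁻¹ - W).IsSymm := (isSymm_diagonal _).sub hW
  rw [hfac, Matrix.mul_inv_rev, hcinv, ← Matrix.mul_assoc]
  simp only [IsSymm, transpose_mul, transpose_nonsing_inv, hS.eq, diagonal_transpose,
    Matrix.mul_assoc]

theorem stmt4 {n : ℕ} (W D P A : Matrix (Fin n) (Fin n) ℝ) (d α : Fin n → ℝ)
    (hWs : W.IsSymm) (hW0 : ∀ i j, 0 ≤ W i j)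
    (hd : ∀ i, d i = ∑ j, W i j) (hdpos : ∀ i, 0 < d i)
    (hD : D = Matrix.diagonal d) (hP : P = D⁻¹ * W)
    (hA : A = Matrix.diagonal α) (hα : ∀ i, 0 < α i ∧ α i < 1)
    (K : Fin n → ℝ) (hK : ∀ i, K i = (∑ j, (1 - A * P)⁻¹ i j)⁻¹)
    (pr : Fin n → Fin n → ℝ)
    (hpr : ∀ i j, pr i j = K i * (1 - A * P)⁻¹ i j)
    (i j : Fin n) :
    d i / (α i * K i) * pr i j = d j / (α j * K j) * pr j i := by
  have hAP : A * P = diagonal (α / d) * W := by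
    have hdinv : (diagonal d)⁻¹ = diagonal d⁻¹ :=
      inv_eq_left_inv (by simp [diagonal_mul_diagonal, fun a => (hdpos a).ne'])
    rw [hA, hP, hD, hdinv, ← Matrix.mul_assoc, diagonal_mul_diagonal, div_eq_mul_inv]
    rfl
  have hAP0 : ∀ a b, 0 ≤ (A * P) a b := fun a b => by
    rw [hAP, diagonal_mul]
    exact mul_nonneg (div_pos (hα a).1 (hdpos a)).le (hW0 a b)
  have hAProw : ∀ a, ∑ b, (A * P) a b < 1 := fun a => by
    simp only [hAP, diagonal_mul, ← Finset.mul_sum, ← hd, Pi.div_apply,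
      div_mul_cancel₀ _ (hdpos a).ne']
    exact (hα a).2
  have hKne : ∀ a, K a ≠ 0 := fun a => by
    rw [hK]
    exact inv_ne_zero (one_pos.trans_le (one_le_sum_inv_one_sub hAP0 hAProw a)).ne'
  have hsymm := (isSymm_diagonal_inv_mul_inv_one_sub_diagonal_mul hWs
    (c := α / d) fun a => (div_pos (hα a).1 (hdpos a)).ne').apply i j
  simp only [diagonal_mul, Pi.div_apply, inv_div, ← hAP] at hsymm
  have hcancel : ∀ a (x y : ℝ), x / (α a * K a) * (K a * y) = x / α a * y := fun a x y => by
    field_simp [hKne a]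
  rw [hpr, hpr, hcancel, hcancel, hsymm]
end

section
/- Let W be symmetric with nonnegative entries and positive row sums dᵢ, D = diag(dᵢ), P = D⁻¹W, A = diag(αᵢ) with 0 < αᵢ < 1. Define ρⱼ(i) = eᵢᵀ(I−AP)⁻¹(I−A)eⱼ = (1−αⱼ)·eᵢᵀ(I−AP)⁻¹eⱼ. Then ((1−αᵢ)/αᵢ)·dᵢ·ρⱼ(i) = ((1−αⱼ)/αⱼ)·dⱼ·ρᵢ(j) for all i, j. -/
/-!
Write `A P = C W` with `C = diag (α / d)`. For symmetric `C` and `W`, the push-through identity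
`(1 - C W)⁻¹ C = C (1 - W C)⁻¹` says that `(1 - C W)⁻¹ C` is its own transpose, i.e.
`(1 - A P)⁻¹ i j * (α j / d j)` is symmetric in `i, j`. Multiplying by the symmetric factor
`(1 - α i) (1 - α j) d i d j / (α i α j)` gives the claim.
-/

open Matrix

namespace Matrix

variable {m n R : Type*} [Fintype m] [Fintype n] [DecidableEq m] [DecidableEq n] [CommRing R]

theorem inv_one_sub_mul_mul_comm (A : Matrix m n R) (B : Matrix n m R) :
    (1 - A * B)⁻¹ * A = A * (1 - B * A)⁻¹ := by
  by_cases hAB : IsUnit (1 - A * B).det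
  · have hBA : IsUnit (1 - B * A).det := by rwa [det_one_sub_mul_comm]
    calc (1 - A * B)⁻¹ * A = (1 - A * B)⁻¹ * (A * (1 - B * A)) * (1 - B * A)⁻¹ := by
          rw [Matrix.mul_assoc _ _ (1 - B * A)⁻¹, Matrix.mul_assoc A, mul_nonsing_inv _ hBA,
            Matrix.mul_one]
      _ = (1 - A * B)⁻¹ * ((1 - A * B) * A) * (1 - B * A)⁻¹ := by
          rw [Matrix.mul_sub, Matrix.sub_mul, Matrix.mul_one, Matrix.one_mul, Matrix.mul_assoc A]
      _ = A * (1 - B * A)⁻¹ := by rw [← Matrix.mul_assoc, nonsing_inv_mul _ hAB, Matrix.one_mul]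
  · have hBA : ¬IsUnit (1 - B * A).det := by rwa [det_one_sub_mul_comm]
    rw [nonsing_inv_apply_not_isUnit _ hAB, nonsing_inv_apply_not_isUnit _ hBA,
      Matrix.zero_mul, Matrix.mul_zero]

theorem IsSymm.inv_one_sub_mul_mul {A B : Matrix n n R} (hA : A.IsSymm) (hB : B.IsSymm) :
    ((1 - A * B)⁻¹ * A).IsSymm := by
  rw [IsSymm, transpose_mul, transpose_nonsing_inv, transpose_sub, transpose_one,
    transpose_mul, hA.eq, hB.eq, inv_one_sub_mul_mul_comm]

end Matrix

theorem stmt6_general {n : ℕ} (W D P A : Matrix (Fin n) (Fin n) ℝ) (d α : Fin n → ℝ)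
    (hWs : W.IsSymm)
    (hdpos : ∀ i, 0 < d i)
    (hD : D = Matrix.diagonal d) (hP : P = D⁻¹ * W)
    (hA : A = Matrix.diagonal α) (hα : ∀ i, 0 < α i ∧ α i < 1)
    (ρ : Fin n → Fin n → ℝ)
    (hρ : ∀ i j, ρ i j = (1 - α j) * (1 - A * P)⁻¹ i j)
    (i j : Fin n) :
    (1 - α i) / α i * d i * ρ i j = (1 - α j) / α j * d j * ρ j i := by
  have hd : ∀ k, d k ≠ 0 := fun k => (hdpos k).ne'
  have hα0 : ∀ k, α k ≠ 0 := fun k => (hα k).1.ne'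
  have hDinv : D⁻¹ = diagonal d⁻¹ := by
    rw [hD]
    exact inv_eq_right_inv (by simp [diagonal_mul_diagonal, hd])
  have hAP : A * P = diagonal (fun k => α k / d k) * W := by
    rw [hP, hA, hDinv, ← Matrix.mul_assoc, diagonal_mul_diagonal]
    simp only [Pi.inv_apply, div_eq_mul_inv]
  set M := (1 - A * P)⁻¹
  have hM : M i j * (α j / d j) = M j i * (α i / d i) := by
    have hsymm := ((isSymm_diagonal fun k => α k / d k).inv_one_sub_mul_mul hWs).apply j i
    rwa [mul_diagonal, mul_diagonal, ← hAP] at hsymm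
  rw [hρ, hρ]
  calc (1 - α i) / α i * d i * ((1 - α j) * M i j)
      = (1 - α i) * (1 - α j) * (d i * d j / (α i * α j)) * (M i j * (α j / d j)) := by
        field_simp [hd j, hα0 j]
    _ = (1 - α i) * (1 - α j) * (d i * d j / (α i * α j)) * (M j i * (α i / d i)) := by rw [hM]
    _ = (1 - α j) / α j * d j * ((1 - α i) * M j i) := by field_simp [hd i, hα0 i]

theorem stmt6 {n : ℕ} (W D P A : Matrix (Fin n) (Fin n) ℝ) (d α : Fin n → ℝ)
    (hWs : W.IsSymm) (hW0 : ∀ i j, 0 ≤ W i j)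
    (hd : ∀ i, d i = ∑ j, W i j) (hdpos : ∀ i, 0 < d i)
    (hD : D = Matrix.diagonal d) (hP : P = D⁻¹ * W)
    (hA : A = Matrix.diagonal α) (hα : ∀ i, 0 < α i ∧ α i < 1)
    (ρ : Fin n → Fin n → ℝ)
    (hρ : ∀ i j, ρ i j = (1 - α j) * (1 - A * P)⁻¹ i j)
    (i j : Fin n) :
    (1 - α i) / α i * d i * ρ i j = (1 - α j) / α j * d j * ρ j i :=
  stmt6_general W D P A d α hWs hdpos hD hP hA hα ρ hρ i j
end

section
/- Let W be symmetric with nonnegative entries and positive degrees dᵢ, P = D⁻¹W, and α ∈ (0,1). Define πⱼ(i) = (1−α)·eᵢᵀ(I−αP)⁻¹eⱼ. Then dᵢ·πⱼ(i) = dⱼ·πᵢ(j) for all i, j. -/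
/-! Writing `D = diagonal d`, one has `1 - α • (D⁻¹ * W) = D⁻¹ * (D - α • W)`, so
`D * (1 - α • (D⁻¹ * W))⁻¹ = D * (D - α • W)⁻¹ * D`, a congruence of the symmetric matrix
`(D - α • W)⁻¹` by a diagonal one. -/

open Matrix

namespace Matrix

variable {ι K : Type*} [Fintype ι] [DecidableEq ι] [CommRing K]

theorem inv_one_sub_smul_inv_diagonal_mul {d : ι → K} (hd : IsUnit d) (α : K)
    (W : Matrix ι ι K) :
    (1 - α • ((diagonal d)⁻¹ * W))⁻¹ = (diagonal d - α • W)⁻¹ * diagonal d := by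
  have hdet : IsUnit (diagonal d).det :=
    (isUnit_iff_isUnit_det _).mp (isUnit_diagonal.mpr hd)
  have hfactor : 1 - α • ((diagonal d)⁻¹ * W) = (diagonal d)⁻¹ * (diagonal d - α • W) := by
    rw [Matrix.mul_sub, nonsing_inv_mul _ hdet, Matrix.mul_smul]
  rw [hfactor, Matrix.mul_inv_rev, nonsing_inv_nonsing_inv _ hdet]

theorem IsSymm.diagonal_mul_mul_diagonal {B : Matrix ι ι K} (hB : B.IsSymm) (d : ι → K) :
    (diagonal d * B * diagonal d).IsSymm := by
  refine IsSymm.ext_iff.mpr fun i j => ?_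
  simp only [mul_diagonal, diagonal_mul, hB.apply i j]
  ring

theorem IsSymm.diagonal_mul_inv_one_sub_smul_inv_diagonal_mul {W : Matrix ι ι K}
    (hW : W.IsSymm) {d : ι → K} (hd : IsUnit d) (α : K) :
    (diagonal d * (1 - α • ((diagonal d)⁻¹ * W))⁻¹).IsSymm := by
  rw [inv_one_sub_smul_inv_diagonal_mul hd, ← Matrix.mul_assoc]
  exact (((isSymm_diagonal d).sub (hW.smul α)).inv).diagonal_mul_mul_diagonal d

end Matrix

theorem stmt10_general {n : ℕ} (W D P : Matrix (Fin n) (Fin n) ℝ) (d : Fin n → ℝ) (α : ℝ)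
    (hWs : W.IsSymm)
    (hdpos : ∀ i, 0 < d i)
    (hD : D = Matrix.diagonal d) (hP : P = D⁻¹ * W)
    (pr : Fin n → Fin n → ℝ)
    (hpr : ∀ i j, pr i j = (1 - α) * (1 - α • P)⁻¹ i j)
    (i j : Fin n) :
    d i * pr i j = d j * pr j i := by
  have hd : IsUnit d := Pi.isUnit_iff.mpr fun k => (hdpos k).ne'.isUnit
  have hsymm := hWs.diagonal_mul_inv_one_sub_smul_inv_diagonal_mul hd α
  have hentry : ∀ a b, d a * pr a b = (1 - α) * (diagonal d * (1 - α • P)⁻¹) a b := by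
    intro a b
    rw [hpr, diagonal_mul]
    ring
  rw [hentry, hentry, hP, hD, hsymm.apply]

theorem stmt10 {n : ℕ} (W D P : Matrix (Fin n) (Fin n) ℝ) (d : Fin n → ℝ) (α : ℝ)
    (hWs : W.IsSymm) (hW0 : ∀ i j, 0 ≤ W i j)
    (hd : ∀ i, d i = ∑ j, W i j) (hdpos : ∀ i, 0 < d i)
    (hD : D = Matrix.diagonal d) (hP : P = D⁻¹ * W)
    (hα : 0 < α) (hα1 : α < 1)
    (pr : Fin n → Fin n → ℝ)
    (hpr : ∀ i j, pr i j = (1 - α) * (1 - α • P)⁻¹ i j)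
    (i j : Fin n) :
    d i * pr i j = d j * pr j i :=
  stmt10_general W D P d α hWs hdpos hD hP pr hpr i j
end

section
/- Let G be a connected undirected graph with degrees dᵢ, and let a > 0. Set αᵢ = dᵢ/(dᵢ+a) and restart distribution v = 𝟙/n (uniform). Then the vector π with πᵢ = (dᵢ+a)/(2|E|+na) is the stationary distribution of the transition matrix P̃ = AD⁻¹W + (I−A)𝟙vᵀ, i.e., πP̃ = π and Σᵢπᵢ = 1. -/
/-!
On the support of `W` the factor `A D⁻¹` is `(D + aI)⁻¹`, so
`P̃ = (D + aI)⁻¹ (W + a 𝟙 vᵀ)`. Multiplying on the left by the row vector `(dᵢ + a)ᵢ` cancels the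
diagonal factor and leaves column sums: those of `W` are the degrees `dⱼ`, those of `a 𝟙 vᵀ` are
`n a vⱼ = a`. Hence `(dᵢ + a)ᵢ` is a left fixed vector of `P̃`, and `π` is its normalization.
-/

open Matrix

namespace SimpleGraph

variable {V K : Type*} [Fintype V] [DecidableEq V] (G : SimpleGraph V) [DecidableRel G.Adj]
  [Field K]

noncomputable def jumpWalkMatrix (a : K) (v : V → K) : Matrix V V K :=
  diagonal (fun i => ((G.degree i : K) + a)⁻¹) * (G.adjMatrix K + of fun _ j => a * v j)

/- `D⁻¹` is Mathlib's junk value `0` as soon as one degree vanishes; on a preconnected graph this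
happens only on a single vertex, where `W = 0`. -/
theorem inv_degreeMatrix_mul_adjMatrix [CharZero K] (hG : G.Preconnected) :
    (diagonal fun i => (G.degree i : K))⁻¹ * G.adjMatrix K =
      diagonal (fun i => (G.degree i : K)⁻¹) * G.adjMatrix K := by
  rcases subsingleton_or_nontrivial V with hV | hV
  · have : G.adjMatrix K = 0 := by
      ext i j
      simp [adjMatrix_apply, G.ne_of_adj.mt (not_not.mpr (Subsingleton.elim i j))]
    simp [this]
  · have hdeg (i : V) : (G.degree i : K) ≠ 0 :=
      Nat.cast_ne_zero.mpr (hG.degree_pos_of_nontrivial i).ne'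
    rw [inv_eq_right_inv (B := diagonal fun i => (G.degree i : K)⁻¹) (by simp [hdeg])]

theorem diagonal_mul_inv_degree_mul_adjMatrix_add_eq_jumpWalkMatrix [CharZero K]
    (hG : G.Preconnected) {a : K} (ha : ∀ i, (G.degree i : K) + a ≠ 0) (v : V → K) :
    diagonal (fun i => (G.degree i : K) / (G.degree i + a)) *
          (diagonal fun i => (G.degree i : K))⁻¹ * G.adjMatrix K +
        (1 - diagonal fun i => (G.degree i : K) / (G.degree i + a)) * of (fun _ j => v j) =
      G.jumpWalkMatrix a v := by
  rw [Matrix.mul_assoc, G.inv_degreeMatrix_mul_adjMatrix hG]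
  ext i j
  have hi := ha i
  simp only [jumpWalkMatrix, Matrix.add_apply, diagonal_mul, sub_mul, Matrix.sub_apply, one_mul,
    of_apply, adjMatrix_apply]
  split_ifs with hij
  · have hdeg : (G.degree i : K) ≠ 0 := Nat.cast_ne_zero.mpr hij.degree_pos_left.ne'
    field_simp
    ring
  · field_simp
    ring

theorem vecMul_jumpWalkMatrix {a : K} (ha : ∀ i, (G.degree i : K) + a ≠ 0) (v : V → K) :
    (fun i => (G.degree i : K) + a) ᵥ* G.jumpWalkMatrix a v =
      fun j => G.degree j + Fintype.card V * a * v j := by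
  have hone : (fun i => (G.degree i : K) + a) ᵥ* diagonal (fun i => ((G.degree i : K) + a)⁻¹) =
      1 := by
    ext i
    simp [vecMul_diagonal, ha i]
  ext j
  rw [jumpWalkMatrix, ← vecMul_vecMul, hone, vecMul_add, Pi.add_apply, adjMatrix_vecMul_apply]
  simp only [Pi.one_apply, Finset.sum_const, card_neighborFinset_eq_degree, nsmul_eq_mul, mul_one,
    vecMul, dotProduct, of_apply, one_mul, Finset.card_univ]
  ring

end SimpleGraph

theorem stmt11 {n : ℕ} (G : SimpleGraph (Fin n)) [DecidableRel G.Adj]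
    (hG : G.Connected) (a : ℝ) (ha : 0 < a)
    (W D A : Matrix (Fin n) (Fin n) ℝ) (d α v π : Fin n → ℝ)
    (hW : W = G.adjMatrix ℝ) (hd : ∀ i, d i = (G.degree i : ℝ))
    (hD : D = Matrix.diagonal d)
    (hα : ∀ i, α i = d i / (d i + a)) (hA : A = Matrix.diagonal α)
    (hv : ∀ i, v i = 1 / (n : ℝ))
    (hπ : ∀ i, π i = (d i + a) / ((∑ k, d k) + n * a))
    (Ptilde : Matrix (Fin n) (Fin n) ℝ)
    (hPt : Ptilde = A * D⁻¹ * W + (1 - A) * Matrix.of (fun _ j => v j)) :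
    Matrix.vecMul π Ptilde = π ∧ ∑ i, π i = 1 := by
  obtain rfl : d = fun i => (G.degree i : ℝ) := funext hd
  obtain rfl : α = fun i => (G.degree i : ℝ) / (G.degree i + a) := funext hα
  obtain rfl : v = fun _ => 1 / (n : ℝ) := funext hv
  have hn : (n : ℝ) ≠ 0 := Nat.cast_ne_zero.mpr (Fin.pos_iff_nonempty.mpr hG.nonempty).ne'
  have hda (i : Fin n) : (G.degree i : ℝ) + a ≠ 0 := by positivity
  have hmass : ∑ i, ((G.degree i : ℝ) + a) = (∑ k, (G.degree k : ℝ)) + n * a := by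
    simp [Finset.sum_add_distrib]
  have hmass_ne : (∑ k, (G.degree k : ℝ)) + n * a ≠ 0 := by positivity
  obtain rfl : π = ((∑ k, (G.degree k : ℝ)) + n * a)⁻¹ • fun i => (G.degree i : ℝ) + a := by
    ext i
    simp [hπ, div_eq_inv_mul]
  subst hW hD hA hPt
  rw [G.diagonal_mul_inv_degree_mul_adjMatrix_add_eq_jumpWalkMatrix hG.preconnected hda]
  refine ⟨?_, ?_⟩
  · rw [smul_vecMul, G.vecMul_jumpWalkMatrix hda, Fintype.card_fin]
    field_simp
  · simp only [Pi.smul_apply, smul_eq_mul, ← Finset.mul_sum, hmass, inv_mul_cancel₀ hmass_ne]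
end

section
/- Let π be a stationary distribution of P̃ = AP + (I−A)𝟙vᵀ (with P row-stochastic, A = diag(αᵢ), αᵢ ∈ [0,1), v a probability row vector, and Σᵢπᵢ(1−αᵢ) > 0). Then vᵀ(I−AP)⁻¹ = π / (Σᵢ πᵢ(1−αᵢ)), and hence the Location-of-Restart PageRank satisfies ρⱼ(v) = πⱼ(1−αⱼ)/(Σᵢ πᵢ(1−αᵢ)). -/
/-! Because `0 ≤ αᵢ < 1` and `P` is row-stochastic, `diag(α) P` has `ℓ∞`-operator norm `< 1`, so
`I - AP` is invertible by the Neumann series. Stationarity `π = π (AP + (I - A) 𝟙 vᵀ)` rearranges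
to `π (I - AP) = c v` with `c = ∑ᵢ πᵢ (1 - αᵢ)`, hence `v (I - AP)⁻¹ = π / c`; multiplying on the
right by the diagonal matrix `I - A` gives `ρ`. -/

open Matrix

section NeumannSeries

attribute [local instance] Matrix.linftyOpNormedRing

theorem isUnit_one_sub_diagonal_mul {ι 𝕜 : Type*} [Fintype ι] [DecidableEq ι]
    [NormedField 𝕜] [CompleteSpace 𝕜] (α : ι → 𝕜) (P : Matrix ι ι 𝕜)
    (hα : ∀ i, ‖α i‖ < 1) (hP : ∀ i, ∑ j, ‖P i j‖ ≤ 1) :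
    IsUnit (1 - diagonal α * P) := by
  have hαnorm : ‖α‖ < 1 := (pi_norm_lt_iff one_pos).2 hα
  have hPnorm : ‖P‖ ≤ 1 := by
    rw [linfty_opNorm_def, ← NNReal.coe_one, NNReal.coe_le_coe]
    refine Finset.sup_le fun i _ => ?_
    rw [← NNReal.coe_le_coe, NNReal.coe_sum]
    exact hP i
  -- The uniformity of the operator norm is the product uniformity only up to unfolding.
  have : @CompleteSpace (Matrix ι ι 𝕜) PseudoMetricSpace.toUniformSpace :=
    (inferInstance : CompleteSpace (ι → ι → 𝕜))
  refine isUnit_one_sub_of_norm_lt_one ?_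
  calc ‖diagonal α * P‖ ≤ ‖diagonal α‖ * ‖P‖ := linfty_opNorm_mul _ _
    _ = ‖α‖ * ‖P‖ := by rw [linfty_opNorm_diagonal]
    _ ≤ ‖α‖ := mul_le_of_le_one_right (norm_nonneg _) hPnorm
    _ < 1 := hαnorm

end NeumannSeries

section

variable {ι R : Type*} [Fintype ι] [CommRing R]

theorem vecMul_replicateRow (w v : ι → R) : w ᵥ* replicateRow ι v = (∑ i, w i) • v := by
  ext j
  simp [vecMul, dotProduct, replicateRow, Finset.sum_mul]

variable [DecidableEq ι]

theorem vecMul_one_sub_diagonal (w α : ι → R) :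
    w ᵥ* (1 - diagonal α) = fun i => w i * (1 - α i) := by
  ext i
  rw [← diagonal_one, diagonal_sub, vecMul_diagonal]

theorem vecMul_one_sub_diagonal_mul_of_stationary (α π v : ι → R) (P : Matrix ι ι R)
    (hπ : π ᵥ* (diagonal α * P + (1 - diagonal α) * replicateRow ι v) = π) :
    π ᵥ* (1 - diagonal α * P) = (∑ i, π i * (1 - α i)) • v := by
  rw [vecMul_add, ← vecMul_vecMul _ (1 - diagonal α), vecMul_replicateRow,
    vecMul_one_sub_diagonal] at hπ
  rw [vecMul_sub, vecMul_one, sub_eq_iff_eq_add', hπ]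

end

theorem vecMul_nonsing_inv_of_vecMul_eq {ι K : Type*} [Fintype ι] [DecidableEq ι] [Field K]
    {M : Matrix ι ι K} (hM : IsUnit M) {x y : ι → K} {c : K} (h : x ᵥ* M = c • y) (hc : c ≠ 0) :
    y ᵥ* M⁻¹ = c⁻¹ • x := by
  rw [eq_inv_smul_iff₀ hc, ← smul_vecMul, ← h, vecMul_vecMul,
    mul_nonsing_inv _ ((isUnit_iff_isUnit_det M).1 hM), vecMul_one]

theorem stmt13_general {n : ℕ} (P A : Matrix (Fin n) (Fin n) ℝ) (α v π : Fin n → ℝ)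
    (hP0 : ∀ i j, 0 ≤ P i j) (hP1 : ∀ i, ∑ j, P i j = 1)
    (hA : A = Matrix.diagonal α) (hα : ∀ i, 0 ≤ α i ∧ α i < 1)
    (hπ : Matrix.vecMul π (A * P + (1 - A) * Matrix.of (fun _ j => v j)) = π)
    (hpos : 0 < ∑ i, π i * (1 - α i)) :
    Matrix.vecMul v (1 - A * P)⁻¹ = (∑ i, π i * (1 - α i))⁻¹ • π ∧
    ∀ j, (Matrix.vecMul v ((1 - A * P)⁻¹ * (1 - A))) j =
      π j * (1 - α j) / (∑ i, π i * (1 - α i)) := by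
  subst hA
  have hM : IsUnit (1 - diagonal α * P) := by
    refine isUnit_one_sub_diagonal_mul α P (fun i => ?_) (fun i => ?_)
    · rw [Real.norm_of_nonneg (hα i).1]
      exact (hα i).2
    · simp only [Real.norm_of_nonneg (hP0 i _), hP1 i, le_refl]
  have hv : v ᵥ* (1 - diagonal α * P)⁻¹ = (∑ i, π i * (1 - α i))⁻¹ • π :=
    vecMul_nonsing_inv_of_vecMul_eq hM
      (vecMul_one_sub_diagonal_mul_of_stationary α π v P hπ) hpos.ne'
  refine ⟨hv, fun j => ?_⟩
  rw [← vecMul_vecMul, hv, smul_vecMul, vecMul_one_sub_diagonal, Pi.smul_apply, smul_eq_mul,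
    inv_mul_eq_div]

theorem stmt13 {n : ℕ} (P A : Matrix (Fin n) (Fin n) ℝ) (α v π : Fin n → ℝ)
    (hP0 : ∀ i j, 0 ≤ P i j) (hP1 : ∀ i, ∑ j, P i j = 1)
    (hA : A = Matrix.diagonal α) (hα : ∀ i, 0 ≤ α i ∧ α i < 1)
    (hv0 : ∀ i, 0 ≤ v i) (hv1 : ∑ i, v i = 1)
    (hπ : Matrix.vecMul π (A * P + (1 - A) * Matrix.of (fun _ j => v j)) = π)
    (hπ1 : ∑ i, π i = 1)
    (hpos : 0 < ∑ i, π i * (1 - α i)) :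
    Matrix.vecMul v (1 - A * P)⁻¹ = (∑ i, π i * (1 - α i))⁻¹ • π ∧
    ∀ j, (Matrix.vecMul v ((1 - A * P)⁻¹ * (1 - A))) j =
      π j * (1 - α j) / (∑ i, π i * (1 - α i)) :=
  stmt13_general P A α v π hP0 hP1 hA hα hπ hpos
end
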